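/- arXiv:1405.2003 — 4 statements merged into one kernel-verified Lean document; each statement's English description precedes it below -/
import Mathlib

section
/- Let G be a Lie group with Lie algebra 𝔤. There exists a neighborhood O of 0 in 𝔤 such that for every X ∈ O and every linear subspace 𝔥 of 𝔤, one has (Ad e^X)𝔥 ⊆ 𝔥 if and only if (ad X)𝔥 ⊆ 𝔥. -/
/-!
For `‖ad X‖ < 1/4` the logarithm series recovers `ad X` from `e^{ad X}`:
`ad X = -∑_{n ≥ 1} (1 - e^{ad X})ⁿ / n`, because termwise differentiation shows that
`t ↦ -∑ (1 - e^{t ad X})ⁿ / n` has constant derivative `ad X`. Hence `ad X` lies in every closed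
subalgebra of `End 𝔤` containing `e^{ad X} = Ad (e^X)`, and conversely the exponential series puts
`e^{ad X}` in every closed subalgebra containing `ad X`. The operators leaving `𝔥` invariant form
such a closed subalgebra.
-/

open Metric Set Topology

theorem norm_pow_mul_le {R : Type*} [SeminormedRing R] (a b : R) (n : ℕ) :
    ‖a ^ n * b‖ ≤ ‖a‖ ^ n * ‖b‖ := by
  induction n with
  | zero => simp
  | succ n ih =>
    calc ‖a ^ (n + 1) * b‖ = ‖a * (a ^ n * b)‖ := by rw [pow_succ', mul_assoc]
      _ ≤ ‖a‖ * (‖a‖ ^ n * ‖b‖) := (norm_mul_le _ _).trans (by gcongr)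
      _ = ‖a‖ ^ (n + 1) * ‖b‖ := by ring

theorem tsum_one_sub_pow_mul_mul_eq {R : Type*} [NormedRing R] [CompleteSpace R] {a : R}
    (ha : ‖1 - a‖ < 1) {b : R} (hab : Commute b a) :
    ∑' n : ℕ, (1 - a) ^ n * (b * a) = b := by
  calc ∑' n : ℕ, (1 - a) ^ n * (b * a) = (∑' n : ℕ, (1 - a) ^ n) * (1 - (1 - a)) * b := by
        rw [(summable_geometric_of_norm_lt_one ha).tsum_mul_right, hab.eq, sub_sub_cancel,
          mul_assoc]
    _ = b := by rw [geom_series_mul_neg _ ha, one_mul]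

theorem HasDerivAt.pow_succ_of_commute {𝕜 𝔸 : Type*} [NontriviallyNormedField 𝕜]
    [NormedRing 𝔸] [NormedAlgebra 𝕜 𝔸] {f : 𝕜 → 𝔸} {f' : 𝔸} {x : 𝕜} (hf : HasDerivAt f f' x)
    (hc : Commute (f x) f') (n : ℕ) :
    HasDerivAt (fun t => f t ^ (n + 1)) ((n + 1) • (f x ^ n * f')) x := by
  have hterm : ∀ i ∈ Finset.range (n + 1), f x ^ (n - i) * f' * f x ^ i = f x ^ n * f' := by
    intro i hi
    rw [mul_assoc, ← (hc.pow_left i).eq, ← mul_assoc,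
      pow_sub_mul_pow _ (Nat.lt_succ_iff.mp (Finset.mem_range.mp hi))]
  refine (hf.fun_pow' (n + 1)).congr_deriv ?_
  rw [Nat.pred_succ, Finset.sum_congr rfl hterm, Finset.sum_const, Finset.card_range]

namespace NormedSpace

variable {𝔸 : Type*} [NormedRing 𝔸] [NormedAlgebra ℝ 𝔸] [CompleteSpace 𝔸]

theorem norm_exp_sub_one_le {x : 𝔸} (hx : ‖x‖ < 1) : ‖exp x - 1‖ ≤ ‖x‖ / (1 - ‖x‖) := by
  have hexp : HasSum (fun n : ℕ => ((n + 1).factorial⁻¹ : ℝ) • x ^ (n + 1)) (exp x - 1) := by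
    simpa using (hasSum_nat_add_iff' 1).mpr (exp_series_hasSum_exp' (𝕂 := ℝ) x)
  have hgeom : HasSum (fun n : ℕ => ‖x‖ ^ (n + 1)) (‖x‖ / (1 - ‖x‖)) := by
    simpa only [pow_succ', div_eq_mul_inv] using
      (hasSum_geometric_of_lt_one (norm_nonneg x) hx).mul_left ‖x‖
  refine hexp.norm_le_of_bounded hgeom fun n => ?_
  calc ‖((n + 1).factorial⁻¹ : ℝ) • x ^ (n + 1)‖
      ≤ ‖((n + 1).factorial⁻¹ : ℝ)‖ * ‖x‖ ^ (n + 1) :=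
        (norm_smul_le _ _).trans (by gcongr; exact norm_pow_le' x n.succ_pos)
    _ ≤ ‖x‖ ^ (n + 1) := by
        rw [Real.norm_of_nonneg (by positivity)]
        exact mul_le_of_le_one_left (by positivity)
          (inv_le_one_of_one_le₀ (by exact_mod_cast (n + 1).factorial_pos))

theorem norm_one_sub_exp_smul_le_half {T : 𝔸} (hT : ‖T‖ < 1 / 4) {s : ℝ} (hs : |s| < 4 / 3) :
    ‖1 - exp (s • T)‖ ≤ 1 / 2 := by
  have hx : ‖s • T‖ < 1 / 3 := by
    rw [norm_smul, Real.norm_eq_abs]; nlinarith [norm_nonneg T, abs_nonneg s]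
  rw [norm_sub_rev]
  refine (norm_exp_sub_one_le (by linarith)).trans ?_
  rw [div_le_iff₀ (by linarith)]
  linarith

theorem hasDerivAt_inv_smul_one_sub_exp_smul_pow (T : 𝔸) (n : ℕ) (t : ℝ) :
    HasDerivAt (fun s : ℝ => ((n : ℝ) + 1)⁻¹ • (1 - exp (s • T)) ^ (n + 1))
      (-((1 - exp (t • T)) ^ n * (T * exp (t • T)))) t := by
  have hv : HasDerivAt (fun s : ℝ => 1 - exp (s • T)) (-(T * exp (t • T))) t :=
    (hasDerivAt_exp_smul_const' T t).const_sub 1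
  have hc : Commute (1 - exp (t • T)) (-(T * exp (t • T))) :=
    ((Commute.one_left _).sub_left
      ((((Commute.refl T).smul_left t).exp_left).mul_right (.refl _))).neg_right
  refine ((hv.pow_succ_of_commute hc n).const_smul ((n : ℝ) + 1)⁻¹).congr_deriv ?_
  rw [← Nat.cast_smul_eq_nsmul ℝ, smul_smul, Nat.cast_succ, inv_mul_cancel₀ (by positivity),
    one_smul, mul_neg]

theorem norm_one_sub_exp_smul_pow_mul_le {T : 𝔸} (hT : ‖T‖ < 1 / 4) {s : ℝ} (hs : |s| < 4 / 3)
    (n : ℕ) : ‖(1 - exp (s • T)) ^ n * (T * exp (s • T))‖ ≤ (1 / 2) ^ n := by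
  have hsmall := norm_one_sub_exp_smul_le_half hT hs
  -- `‖1‖` need not be `1`, so `‖exp (s • T)‖` is not bounded directly
  have hTe : ‖T * exp (s • T)‖ ≤ 1 := calc
    ‖T * exp (s • T)‖ = ‖T - T * (1 - exp (s • T))‖ := by rw [mul_sub, mul_one, sub_sub_cancel]
    _ ≤ ‖T‖ + ‖T‖ * ‖1 - exp (s • T)‖ :=
      (norm_sub_le _ _).trans (by gcongr; exact norm_mul_le _ _)
    _ ≤ 1 := by nlinarith [norm_nonneg T]
  calc ‖(1 - exp (s • T)) ^ n * (T * exp (s • T))‖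
      ≤ ‖1 - exp (s • T)‖ ^ n * ‖T * exp (s • T)‖ := norm_pow_mul_le _ _ _
    _ ≤ (1 / 2) ^ n * 1 := by gcongr
    _ = (1 / 2) ^ n := mul_one _

theorem hasSum_inv_smul_one_sub_exp_pow {T : 𝔸} (hT : ‖T‖ < 1 / 4) :
    HasSum (fun n : ℕ => ((n : ℝ) + 1)⁻¹ • (1 - exp T) ^ (n + 1)) (-T) := by
  set g : ℕ → ℝ → 𝔸 := fun n s => ((n : ℝ) + 1)⁻¹ • (1 - exp (s • T)) ^ (n + 1)
  set g' : ℕ → ℝ → 𝔸 := fun n s => -((1 - exp (s • T)) ^ n * (T * exp (s • T)))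
  set I := ball (0 : ℝ) (4 / 3)
  have hI : IsPreconnected I := (convex_ball 0 _).isPreconnected
  have h0 : (0 : ℝ) ∈ I := mem_ball_self (by norm_num)
  have h1 : (1 : ℝ) ∈ I := by rw [mem_ball_zero_iff, norm_one]; norm_num
  have hg : ∀ n, ∀ s ∈ I, HasDerivAt (g n) (g' n s) s := fun n s _ =>
    hasDerivAt_inv_smul_one_sub_exp_smul_pow T n s
  have hbound : ∀ n, ∀ s ∈ I, ‖g' n s‖ ≤ (1 / 2) ^ n := fun n s hs => by
    rw [norm_neg]
    exact norm_one_sub_exp_smul_pow_mul_le hT (mem_ball_zero_iff.mp hs) n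
  have hg0 : Summable fun n => g n 0 := by simp [g]
  have hderiv : ∀ s ∈ I, HasDerivAt (fun r => ∑' n, g n r) (-T) s := fun s hs => by
    refine (hasDerivAt_tsum_of_isPreconnected summable_geometric_two isOpen_ball hI hg hbound h0
      hg0 hs).congr_deriv ?_
    rw [tsum_neg, tsum_one_sub_pow_mul_mul_eq
      ((norm_one_sub_exp_smul_le_half hT (mem_ball_zero_iff.mp hs)).trans_lt (by norm_num))
      ((Commute.refl T).smul_right s).exp_right]
  have heq : EqOn (fun r => ∑' n, g n r) (fun r => -(r • T)) I := by
    refine isOpen_ball.eqOn_of_deriv_eq hI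
      (fun s hs => (hderiv s hs).differentiableAt.differentiableWithinAt) (by fun_prop)
      (fun s hs => ?_) h0 (by simp [g])
    rw [(hderiv s hs).deriv, ((hasDerivAt_id' s).smul_const T).fun_neg.deriv, one_smul]
  have hF1 : ∑' n, g n 1 = -T := by simpa using heq h1
  rw [← hF1]
  exact (summable_of_summable_hasDerivAt_of_isPreconnected summable_geometric_two isOpen_ball hI
    hg hbound h0 hg0 h1).hasSum.congr_fun fun n => by simp [g]

theorem exp_mem_iff {S : Subalgebra ℝ 𝔸} (hS : IsClosed (S : Set 𝔸)) {T : 𝔸}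
    (hT : ‖T‖ < 1 / 4) : exp T ∈ S ↔ T ∈ S := by
  refine ⟨fun h => ?_, fun h => ?_⟩
  · have hneg : -T ∈ S := (hasSum_inv_smul_one_sub_exp_pow hT).tsum_eq ▸
      tsum_mem hS fun n => S.smul_mem (S.pow_mem (S.sub_mem S.one_mem h) _) _
    simpa using S.neg_mem hneg
  · rw [exp_eq_tsum ℝ]
    exact tsum_mem hS fun n => S.smul_mem (S.pow_mem h n) _

end NormedSpace

namespace Submodule

variable {𝕜 E : Type*} [NontriviallyNormedField 𝕜] [NormedAddCommGroup E] [NormedSpace 𝕜 E]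

def invtSubalgebra (p : Submodule 𝕜 E) : Subalgebra 𝕜 (E →L[𝕜] E) where
  carrier := {T | ∀ x ∈ p, T x ∈ p}
  mul_mem' hS hT x hx := hS _ (hT x hx)
  add_mem' hS hT x hx := p.add_mem (hS x hx) (hT x hx)
  algebraMap_mem' c _ hx := p.smul_mem c hx

theorem mem_invtSubalgebra {p : Submodule 𝕜 E} {T : E →L[𝕜] E} :
    T ∈ p.invtSubalgebra ↔ ∀ x ∈ p, T x ∈ p :=
  Iff.rfl

theorem isClosed_invtSubalgebra {p : Submodule 𝕜 E} (hp : IsClosed (p : Set E)) :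
    IsClosed (p.invtSubalgebra : Set (E →L[𝕜] E)) := by
  simp only [invtSubalgebra, Subalgebra.coe_mk, ofPred_forall]
  exact isClosed_biInter fun x _ => hp.preimage (continuous_eval_const x)

end Submodule

-- `LieRing 𝔤` brings a second additive structure on `𝔤`; the normed one must be preferred.
attribute [local instance 2000] SeminormedAddCommGroup.toAddCommGroup

theorem ad_stable_iff_Ad_exp_stable_general
    (G : Type*) [Group G]
    (𝔤 : Type*) [NormedAddCommGroup 𝔤] [NormedSpace ℝ 𝔤] [FiniteDimensional ℝ 𝔤]
    [LieRing 𝔤]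
    (Exp : 𝔤 → G) (Ad : G →* (𝔤 ≃ₗ[ℝ] 𝔤)) (ad : 𝔤 →ₗ[ℝ] (𝔤 →L[ℝ] 𝔤))
    (had : ∀ X Y : 𝔤, ad X Y = ⁅X, Y⁆)
    (hAdExp : ∀ X Y : 𝔤, Ad (Exp X) Y = NormedSpace.exp (ad X) Y) :
    ∃ O ∈ 𝓝 (0 : 𝔤), ∀ X ∈ O, ∀ 𝔥 : Submodule ℝ 𝔤,
      ((∀ Y ∈ 𝔥, Ad (Exp X) Y ∈ 𝔥) ↔ (∀ Y ∈ 𝔥, ⁅X, Y⁆ ∈ 𝔥)) := by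
  have := FiniteDimensional.complete ℝ 𝔤
  refine ⟨ad ⁻¹' ball 0 (1 / 4),
    (isOpen_ball.preimage (LinearMap.continuous_of_finiteDimensional ad)).mem_nhds (by simp),
    fun X hX 𝔥 => ?_⟩
  simp only [hAdExp, ← had, ← Submodule.mem_invtSubalgebra]
  exact NormedSpace.exp_mem_iff (𝔥.isClosed_invtSubalgebra 𝔥.closed_of_finiteDimensional)
    (mem_ball_zero_iff.mp hX)

/-- Let `G` be a Lie group with Lie algebra `𝔤`, exponential map `Exp`, adjoint representation
`Ad : G →* GL(𝔤)` and infinitesimal adjoint `ad X = ⁅X, ·⁆`, linked by the standard identity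
`Ad (Exp X) = e^{ad X}`. There exists a neighborhood `O` of `0` in `𝔤` such that for every
`X ∈ O` and every linear subspace `𝔥` of `𝔤`, `(Ad e^X) 𝔥 ⊆ 𝔥` iff `(ad X) 𝔥 ⊆ 𝔥`. -/
theorem ad_stable_iff_Ad_exp_stable
    (G : Type*) [Group G]
    (𝔤 : Type*) [NormedAddCommGroup 𝔤] [NormedSpace ℝ 𝔤] [FiniteDimensional ℝ 𝔤]
    [LieRing 𝔤] [LieAlgebra ℝ 𝔤]
    (Exp : 𝔤 → G) (Ad : G →* (𝔤 ≃ₗ[ℝ] 𝔤)) (ad : 𝔤 →ₗ[ℝ] (𝔤 →L[ℝ] 𝔤))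
    (had : ∀ X Y : 𝔤, ad X Y = ⁅X, Y⁆)
    (hAdExp : ∀ X Y : 𝔤, Ad (Exp X) Y = NormedSpace.exp (ad X) Y) :
    ∃ O ∈ 𝓝 (0 : 𝔤), ∀ X ∈ O, ∀ 𝔥 : Submodule ℝ 𝔤,
      ((∀ Y ∈ 𝔥, Ad (Exp X) Y ∈ 𝔥) ↔ (∀ Y ∈ 𝔥, ⁅X, Y⁆ ∈ 𝔥)) :=
  ad_stable_iff_Ad_exp_stable_general G 𝔤 Exp Ad ad had hAdExp
end

section
/- Let V be a finite-dimensional Hilbert space, and let W₁ and W₂ be two distinct linear subspaces of V of the same dimension; set α = d(W₁,W₂). Then there exists a proper linear subspace W₀ of W₁ such that for all r ∈ (0,1), the intersection W₁^{(r)} ∩ W₂^{(r)} is contained in W₀^{(3r/α)}. -/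
/-!
Let `B` be the restriction to `W₁` of the orthogonal projection onto `W₂ᗮ`, so that
`d(w, W₂) = ‖B w‖` for `w ∈ W₁` and `α = ‖B‖`; since `W₁ ⊄ W₂`, `0 < α ≤ 1`. Take a unit
`u₀ ∈ W₁` with `‖B u₀‖ = ‖B‖`. It is a top eigenvector of `B†B`, so
`α² ⟪u₀, w⟫ = ⟪B u₀, B w⟫` and hence `α |⟪u₀, w⟫| ≤ ‖B w‖` for all `w ∈ W₁`. With
`W₀ = W₁ ∩ u₀ᗮ` this says `α d(w, W₀) ≤ d(w, W₂)` on `W₁`, and a point `r`-close to both `W₁`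
and `W₂` is then within `r + 2r/α ≤ 3r/α` of `W₀`.
-/

open Metric Set Topology

/-- Distance between subspaces (as subsets): `d(W,W') = sup {d(u,W') : u ∈ W, ‖u‖ = 1}`. -/
noncomputable def subDist {V : Type*} [NormedAddCommGroup V] (W W' : Set V) : ℝ :=
  sSup {r | ∃ u ∈ W, ‖u‖ = 1 ∧ r = Metric.infDist u W'}

open scoped InnerProductSpace InnerProduct

theorem Metric.thickening_inter_thickening_subset_thickening {X : Type*} [PseudoMetricSpace X]
    {S₀ S₁ S₂ : Set X} (h₀ : S₀.Nonempty) {α : ℝ} (hα₀ : 0 < α) (hα₁ : α ≤ 1)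
    (h : ∀ w ∈ S₁, α * infDist w S₀ ≤ infDist w S₂) (r : ℝ) :
    thickening r S₁ ∩ thickening r S₂ ⊆ thickening (3 * r / α) S₀ := by
  rintro x ⟨hx₁, hx₂⟩
  obtain ⟨w₁, hw₁, hxw₁⟩ := mem_thickening_iff.mp hx₁
  obtain ⟨w₂, hw₂, hxw₂⟩ := mem_thickening_iff.mp hx₂
  have hw₁S₂ : infDist w₁ S₂ < 2 * r :=
    calc infDist w₁ S₂ ≤ dist w₁ w₂ := infDist_le_dist_of_mem hw₂
      _ ≤ dist x w₁ + dist x w₂ := dist_triangle_left _ _ _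
      _ < 2 * r := by linarith
  have hw₁S₀ : infDist w₁ S₀ < 2 * r / α := by
    rw [lt_div_iff₀ hα₀]
    linarith [h w₁ hw₁]
  have hr : r ≤ r / α := le_div_self (dist_nonneg.trans hxw₁.le) hα₀ hα₁
  rw [mem_thickening_iff_infDist_lt h₀]
  calc infDist x S₀ ≤ infDist w₁ S₀ + dist x w₁ := infDist_le_infDist_add_dist
    _ < 2 * r / α + r := add_lt_add hw₁S₀ hxw₁
    _ ≤ 3 * r / α := by linarith [show 3 * r / α = 2 * r / α + r / α by ring]

namespace ContinuousLinearMap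

variable {𝕜 E F : Type*} [RCLike 𝕜] [NormedAddCommGroup E] [InnerProductSpace 𝕜 E]
  [NormedAddCommGroup F] [InnerProductSpace 𝕜 F]

theorem exists_norm_eq_one_and_norm_apply_eq_opNorm [FiniteDimensional 𝕜 E] [Nontrivial E]
    (f : E →L[𝕜] F) : ∃ x, ‖x‖ = 1 ∧ ‖f x‖ = ‖f‖ := by
  have := FiniteDimensional.proper_rclike 𝕜 E
  obtain ⟨x, hx⟩ := exists_ne (0 : E)
  have hne : (sphere (0 : E) 1).Nonempty :=
    ⟨_, mem_sphere_zero_iff_norm.mpr (norm_smul_inv_norm (𝕜 := 𝕜) hx)⟩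
  obtain ⟨u, hu, hmax⟩ := (isCompact_sphere 0 1).exists_isMaxOn hne f.continuous.norm.continuousOn
  refine ⟨u, mem_sphere_zero_iff_norm.mp hu, ?_⟩
  have hgreatest : IsGreatest ((fun x => ‖f x‖) '' sphere 0 1) ‖f u‖ :=
    ⟨mem_image_of_mem _ hu, by rintro _ ⟨y, hy, rfl⟩; exact hmax hy⟩
  rw [← f.sSup_sphere_eq_norm, hgreatest.csSup_eq]

variable [CompleteSpace E] [CompleteSpace F]

theorem adjoint_comp_self_apply_eq_of_norm_apply_eq_opNorm (B : E →L[𝕜] F) {u : E}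
    (hu : ‖u‖ = 1) (hBu : ‖B u‖ = ‖B‖) : (B† ∘L B) u = ((‖B‖ ^ 2 : ℝ) : 𝕜) • u := by
  have hre : ∀ x, (B† ∘L B).reApplyInnerSelf x = ‖B x‖ ^ 2 := fun x =>
    (apply_norm_sq_eq_inner_adjoint_left B x).symm
  have hmax : IsMaxOn (B† ∘L B).reApplyInnerSelf (sphere 0 ‖u‖) u := by
    intro x hx
    rw [mem_sphere_zero_iff_norm, hu] at hx
    simp only [mem_ofPred_eq, hre, hBu]
    gcongr
    simpa [hx] using B.le_opNorm x
  have hu₀ : u ≠ 0 := norm_ne_zero_iff.mp (hu ▸ one_ne_zero)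
  have := ((isPositive_adjoint_comp_self B).isSelfAdjoint.hasEigenvector_of_isLocalExtrOn hu₀
    (Or.inr hmax.localize)).apply_eq_smul
  rwa [rayleighQuotient, hre, hu, hBu, one_pow, div_one] at this

theorem opNorm_mul_norm_inner_le_of_norm_apply_eq_opNorm (B : E →L[𝕜] F) {u : E}
    (hu : ‖u‖ = 1) (hBu : ‖B u‖ = ‖B‖) (w : E) : ‖B‖ * ‖⟪u, w⟫_𝕜‖ ≤ ‖B w‖ := by
  rcases (norm_nonneg B).eq_or_lt with hB | hB
  · rw [← hB, zero_mul]
    exact norm_nonneg _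
  refine le_of_mul_le_mul_left ?_ hB
  calc ‖B‖ * (‖B‖ * ‖⟪u, w⟫_𝕜‖) = ‖⟪(B† ∘L B) u, w⟫_𝕜‖ := by
        rw [adjoint_comp_self_apply_eq_of_norm_apply_eq_opNorm B hu hBu, inner_smul_left,
          norm_mul, RCLike.norm_conj, RCLike.norm_ofReal, abs_of_nonneg (by positivity)]
        ring
    _ = ‖⟪B u, B w⟫_𝕜‖ := by rw [comp_apply, adjoint_inner_left]
    _ ≤ ‖B u‖ * ‖B w‖ := norm_inner_le_norm _ _
    _ = ‖B‖ * ‖B w‖ := by rw [hBu]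

end ContinuousLinearMap

namespace Submodule

variable {𝕜 E : Type*} [RCLike 𝕜] [NormedAddCommGroup E] [InnerProductSpace 𝕜 E]

theorem infDist_eq_norm_starProjection_orthogonal (K : Submodule 𝕜 E)
    [K.HasOrthogonalProjection] (x : E) : infDist x K = ‖Kᗮ.starProjection x‖ := by
  rw [starProjection_orthogonal, sub_apply, ContinuousLinearMap.id_apply,
    starProjection_minimal, infDist_eq_iInf]
  simp only [dist_eq_norm]
  rfl

theorem starProjection_orthogonal_comp_subtypeL_eq_zero_iff {K L : Submodule 𝕜 E}
    [L.HasOrthogonalProjection] : Lᗮ.starProjection ∘L K.subtypeL = 0 ↔ K ≤ L := by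
  simp only [ContinuousLinearMap.ext_iff, ContinuousLinearMap.comp_apply, subtypeL_apply,
    zero_apply, starProjection_apply_eq_zero_iff, orthogonal_orthogonal]
  exact ⟨fun h x hx => h ⟨x, hx⟩, fun h x => h x.2⟩

theorem subDist_eq_norm_starProjection_orthogonal_comp_subtypeL (K L : Submodule 𝕜 E)
    [L.HasOrthogonalProjection] :
    subDist (K : Set E) L = ‖Lᗮ.starProjection ∘L K.subtypeL‖ := by
  rw [← ContinuousLinearMap.sSup_sphere_eq_norm, subDist]
  congr 1
  ext r
  simp [infDist_eq_norm_starProjection_orthogonal, eq_comm, and_left_comm]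

theorem infDist_inf_orthogonal_singleton_le (K : Submodule 𝕜 E) {u w : E} (hu : ‖u‖ = 1)
    (huK : u ∈ K) (hwK : w ∈ K) : infDist w (K ⊓ (𝕜 ∙ u)ᗮ : Submodule 𝕜 E) ≤ ‖⟪u, w⟫_𝕜‖ := by
  have hmem : w - ⟪u, w⟫_𝕜 • u ∈ K ⊓ (𝕜 ∙ u)ᗮ := by
    refine mem_inf.mpr ⟨K.sub_mem hwK (K.smul_mem _ huK), ?_⟩
    rw [mem_orthogonal_singleton_iff_inner_right, inner_sub_right, inner_smul_right,
      inner_self_eq_norm_sq_to_K, hu]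
    simp
  calc infDist w (K ⊓ (𝕜 ∙ u)ᗮ : Submodule 𝕜 E) ≤ dist w (w - ⟪u, w⟫_𝕜 • u) :=
        infDist_le_dist_of_mem hmem
    _ = ‖⟪u, w⟫_𝕜‖ := by rw [dist_eq_norm, sub_sub_cancel, norm_smul, hu, mul_one]

end Submodule

/-- Let `V` be a finite-dimensional Hilbert space and `W₁ ≠ W₂` two subspaces of the same
dimension, and set `α = d(W₁,W₂)`. Then there is a proper subspace `W₀` of `W₁` such that for all
`r ∈ (0,1)`, `W₁^{(r)} ∩ W₂^{(r)} ⊆ W₀^{(3r/α)}` (open neighborhoods). -/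
theorem neighborhoods_of_transverse_subspaces
    {𝕜 : Type*} [RCLike 𝕜] (V : Type*) [NormedAddCommGroup V] [InnerProductSpace 𝕜 V]
    [FiniteDimensional 𝕜 V]
    (W₁ W₂ : Submodule 𝕜 V) (hne : W₁ ≠ W₂)
    (hdim : Module.finrank 𝕜 W₁ = Module.finrank 𝕜 W₂)
    (α : ℝ) (hα : α = subDist (W₁ : Set V) (W₂ : Set V)) :
    ∃ W₀ : Submodule 𝕜 V, W₀ ≤ W₁ ∧ W₀ ≠ W₁ ∧
      ∀ r : ℝ, 0 < r → r < 1 →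
        Metric.thickening r (W₁ : Set V) ∩ Metric.thickening r (W₂ : Set V) ⊆
          Metric.thickening (3 * r / α) (W₀ : Set V) := by
  have := FiniteDimensional.complete 𝕜 V
  have hnle : ¬ W₁ ≤ W₂ := fun hle => hne (Submodule.eq_of_le_of_finrank_eq hle hdim)
  set B : W₁ →L[𝕜] V := W₂ᗮ.starProjection ∘L W₁.subtypeL
  have hαB : α = ‖B‖ :=
    hα.trans (Submodule.subDist_eq_norm_starProjection_orthogonal_comp_subtypeL W₁ W₂)
  have hα₀ : 0 < α :=
    hαB ▸ norm_pos_iff.mpr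
      (mt Submodule.starProjection_orthogonal_comp_subtypeL_eq_zero_iff.mp hnle)
  have hα₁ : α ≤ 1 := hαB ▸ (ContinuousLinearMap.opNorm_comp_le _ _).trans
    (mul_le_one₀ (Submodule.starProjection_norm_le _) (norm_nonneg _)
      (Submodule.norm_subtypeL_le _))
  have : Nontrivial W₁ := Submodule.nontrivial_iff_ne_bot.mpr fun h => hnle (h ▸ bot_le)
  obtain ⟨u₀, hu₀, hBu₀⟩ := B.exists_norm_eq_one_and_norm_apply_eq_opNorm
  refine ⟨W₁ ⊓ (𝕜 ∙ (u₀ : V))ᗮ, inf_le_left, fun hW => ?_, fun r _ _ => ?_⟩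
  · have hu₀W : (u₀ : V) ∈ W₁ ⊓ (𝕜 ∙ (u₀ : V))ᗮ := by
      rw [hW]
      exact u₀.2
    rw [Submodule.mem_inf, Submodule.mem_orthogonal_singleton_iff_inner_right,
      inner_self_eq_zero] at hu₀W
    simp [hu₀W.2] at hu₀
  refine Metric.thickening_inter_thickening_subset_thickening ⟨0, zero_mem _⟩ hα₀ hα₁
    (fun w hw => ?_) r
  calc α * infDist w (W₁ ⊓ (𝕜 ∙ (u₀ : V))ᗮ : Submodule 𝕜 V) ≤ α * ‖⟪(u₀ : V), w⟫_𝕜‖ := by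
        gcongr
        exact W₁.infDist_inf_orthogonal_singleton_le hu₀ u₀.2 hw
    _ ≤ ‖B ⟨w, hw⟩‖ := hαB ▸ B.opNorm_mul_norm_inner_le_of_norm_apply_eq_opNorm hu₀ hBu₀ ⟨w, hw⟩
    _ = infDist w W₂ := (W₂.infDist_eq_norm_starProjection_orthogonal w).symm
end

section
/- There exists an absolute constant C (one may take C = 3) such that the following holds for every 0 < ρ < 1/2. Let f : ℝ^d → ℝ^d be a C¹ map such that (1) the linear map f'(0) : ℝ^d → ℝ^d is ρ^{-1}-bi-Lipschitz, and (2) the map f' : ℝ^d → End(ℝ^d) is ρ^{-1}-Lipschitz. Then f induces a ρ^{-C}-bi-Lipschitz C¹-diffeomorphism from the ball B(0,ρ^C) onto its image. -/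
open Metric Set Module
open scoped NNReal

/-!
On `B(0, ρ³)` the Lipschitz bound on `f'` keeps `f'` within `ρ²` of `A = f'(0)`, so by the mean
value inequality `f - A` is `ρ²`-Lipschitz there. As `A` expands lengths by at least `ρ > ρ²`, this
makes `f` bi-Lipschitz with constants `ρ - ρ²` and `ρ⁻¹ + ρ²` and keeps every `f'(x)` invertible;
the inverse function theorem for maps approximating a linear equivalence then supplies a local
homeomorphism whose inverse is `C¹` by the formula for the derivative of an inverse.
-/

section

variable {𝕜 : Type*} [NontriviallyNormedField 𝕜]
  {E : Type*} [NormedAddCommGroup E] [NormedSpace 𝕜 E]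
  {F : Type*} [NormedAddCommGroup F] [NormedSpace 𝕜 F]

theorem ContinuousLinearMap.le_norm_apply_of_norm_sub_le {A B : E →L[𝕜] F} {m c : ℝ}
    (hA : ∀ v, m * ‖v‖ ≤ ‖A v‖) (hB : ‖B - A‖ ≤ c) (v : E) : (m - c) * ‖v‖ ≤ ‖B v‖ := by
  have h : ‖A v - B v‖ ≤ c * ‖v‖ := by
    rw [norm_sub_rev]
    exact (B - A).le_of_opNorm_le hB v
  linarith [norm_sub_norm_le (A v) (B v), hA v]

variable {f : E → F} {A : E →L[𝕜] F} {s : Set E} {c : ℝ≥0}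

theorem ApproximatesLinearOn.norm_image_sub_le {M : ℝ} (hf : ApproximatesLinearOn f A s c)
    (hA : ∀ v, ‖A v‖ ≤ M * ‖v‖) {x y : E} (hx : x ∈ s) (hy : y ∈ s) :
    ‖f x - f y‖ ≤ (M + c) * ‖x - y‖ := by
  have h := norm_sub_norm_le (f x - f y) (A (x - y))
  linarith [hf x hx y hy, hA (x - y)]

theorem ApproximatesLinearOn.le_norm_image_sub {m : ℝ} (hf : ApproximatesLinearOn f A s c)
    (hA : ∀ v, m * ‖v‖ ≤ ‖A v‖) {x y : E} (hx : x ∈ s) (hy : y ∈ s) :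
    (m - c) * ‖x - y‖ ≤ ‖f x - f y‖ := by
  have h := norm_sub_norm_le (A (x - y)) (f x - f y)
  rw [norm_sub_rev (A (x - y))] at h
  linarith [hf x hx y hy, hA (x - y)]

end

section

variable {E : Type*} [NormedAddCommGroup E] [NormedSpace ℝ E]
  {F : Type*} [NormedAddCommGroup F] [NormedSpace ℝ F] {m : ℝ}

theorem Convex.approximatesLinearOn_of_norm_fderiv_sub_le {f : E → F} {A : E →L[ℝ] F} {s : Set E}
    {c : ℝ≥0} (hs : Convex ℝ s) (hf : ∀ x ∈ s, DifferentiableAt ℝ f x)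
    (hfA : ∀ x ∈ s, ‖fderiv ℝ f x - A‖ ≤ c) : ApproximatesLinearOn f A s c := fun _ hx _ hy =>
  hs.norm_image_sub_le_of_norm_fderiv_le' hf hfA hy hx

theorem ContinuousLinearMap.exists_equiv_of_le_norm_apply [FiniteDimensional ℝ E]
    [FiniteDimensional ℝ F] (hdim : finrank ℝ E = finrank ℝ F) (B : E →L[ℝ] F) (hm : 0 < m)
    (hB : ∀ v, m * ‖v‖ ≤ ‖B v‖) : ∃ e : E ≃L[ℝ] F, (e : E →L[ℝ] F) = B := by
  have hinj : Function.Injective B := fun v w hvw => by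
    have h := hB (v - w)
    rw [map_sub, hvw, sub_self, norm_zero] at h
    exact sub_eq_zero.mp (norm_le_zero_iff.mp (nonpos_of_mul_nonpos_right h hm))
  exact ⟨((B : E →ₗ[ℝ] F).linearEquivOfInjective hinj hdim).toContinuousLinearEquiv, rfl⟩

theorem ContinuousLinearEquiv.subsingleton_or_lt_inv_nnnorm_symm (e : E ≃L[ℝ] F) {c : ℝ≥0}
    (hc : c < m) (he : ∀ v, m * ‖v‖ ≤ ‖e v‖) :
    Subsingleton E ∨ c < ‖(e.symm : F →L[ℝ] E)‖₊⁻¹ := by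
  refine e.subsingleton_or_norm_symm_pos.imp id fun hpos => ?_
  have hm : 0 < m := c.coe_nonneg.trans_lt hc
  have hsymm : ‖(e.symm : F →L[ℝ] E)‖ ≤ m⁻¹ := by
    refine ContinuousLinearMap.opNorm_le_bound _ (inv_nonneg.mpr hm.le) fun w => ?_
    rw [le_inv_mul_iff₀ hm]
    simpa using he (e.symm w)
  rw [← NNReal.coe_lt_coe, NNReal.coe_inv, coe_nnnorm]
  calc (c : ℝ) < m := hc
    _ ≤ _ := by rw [le_inv_comm₀ hm hpos]; exact hsymm

theorem exists_contDiffOn_leftInvOn_of_norm_fderiv_sub_le [FiniteDimensional ℝ E]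
    [FiniteDimensional ℝ F] (hdim : finrank ℝ E = finrank ℝ F) {f : E → F} {A : E →L[ℝ] F}
    {s : Set E} {c : ℝ≥0} {n : WithTop ℕ∞} (hs : IsOpen s) (hs' : Convex ℝ s)
    (hf : ContDiffOn ℝ n f s) (hn : n ≠ 0) (hA : ∀ v, m * ‖v‖ ≤ ‖A v‖) (hc : c < m)
    (hfA : ∀ x ∈ s, ‖fderiv ℝ f x - A‖ ≤ c) :
    ∃ g : F → E, ContDiffOn ℝ n g (f '' s) ∧ LeftInvOn g f s := by
  have hdiff : ∀ x ∈ s, DifferentiableAt ℝ f x := fun x hx =>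
    (hf.differentiableOn hn).differentiableAt (hs.mem_nhds hx)
  obtain ⟨e, rfl⟩ := A.exists_equiv_of_le_norm_apply hdim (c.coe_nonneg.trans_lt hc) hA
  let φ := (hs'.approximatesLinearOn_of_norm_fderiv_sub_le hdiff hfA).toOpenPartialHomeomorph f s
    (e.subsingleton_or_lt_inv_nnnorm_symm hc hA) hs
  refine ⟨φ.symm, ?_, fun x hx => φ.left_inv hx⟩
  rintro _ ⟨x, hx, rfl⟩
  obtain ⟨ex, hex⟩ := (fderiv ℝ f x).exists_equiv_of_le_norm_apply hdim (sub_pos.mpr hc)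
    (ContinuousLinearMap.le_norm_apply_of_norm_sub_le hA (hfA x hx))
  have hφx : φ.symm (f x) = x := φ.left_inv hx
  refine (φ.contDiffAt_symm (f₀' := ex) (mem_image_of_mem f hx) ?_ ?_).contDiffWithinAt
  · rw [hφx, hex]
    exact (hdiff x hx).hasFDerivAt
  · rw [hφx]
    exact hf.contDiffAt (hs.mem_nhds hx)

end

/-- **Quantitative Inverse Function Theorem.** There is an absolute constant `C` (one may take
`C = 3`) such that for every `0 < ρ < 1/2`: if `f : ℝ^d → ℝ^d` is `C¹`, `f'(0)` is
`ρ⁻¹`-bi-Lipschitz, and `f'` is `ρ⁻¹`-Lipschitz (operator norm), then `f` induces a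
`ρ^{-C}`-bi-Lipschitz `C¹`-diffeomorphism from `B(0,ρ^C)` onto its image. -/
theorem quantitative_inverse_function_theorem :
    ∃ C : ℕ, ∀ (d : ℕ) (ρ : ℝ), 0 < ρ → ρ < 1/2 →
      ∀ f : EuclideanSpace ℝ (Fin d) → EuclideanSpace ℝ (Fin d),
        ContDiff ℝ 1 f →
        (∀ v : EuclideanSpace ℝ (Fin d), ‖fderiv ℝ f 0 v‖ ≤ ρ⁻¹ * ‖v‖) →
        (∀ v : EuclideanSpace ℝ (Fin d), ρ * ‖v‖ ≤ ‖fderiv ℝ f 0 v‖) →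
        (∀ x y : EuclideanSpace ℝ (Fin d), ‖fderiv ℝ f x - fderiv ℝ f y‖ ≤ ρ⁻¹ * ‖x - y‖) →
        Set.InjOn f (Metric.ball 0 (ρ ^ C)) ∧
        (∀ x ∈ Metric.ball (0 : EuclideanSpace ℝ (Fin d)) (ρ ^ C),
          ∀ y ∈ Metric.ball (0 : EuclideanSpace ℝ (Fin d)) (ρ ^ C),
            ρ ^ C * dist x y ≤ dist (f x) (f y) ∧ dist (f x) (f y) ≤ (ρ ^ C)⁻¹ * dist x y) ∧
        (∃ g : EuclideanSpace ℝ (Fin d) → EuclideanSpace ℝ (Fin d),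
          ContDiffOn ℝ 1 g (f '' Metric.ball 0 (ρ ^ C)) ∧
          ∀ x ∈ Metric.ball (0 : EuclideanSpace ℝ (Fin d)) (ρ ^ C), g (f x) = x) := by
  refine ⟨3, fun d ρ hρ hρ2 f hf hub hlb hLip => ?_⟩
  obtain ⟨c, hc⟩ : ∃ c : ℝ≥0, (c : ℝ) = ρ ^ 2 := ⟨⟨ρ ^ 2, by positivity⟩, rfl⟩
  have hfA (x) (hx : x ∈ ball 0 (ρ ^ 3)) : ‖fderiv ℝ f x - fderiv ℝ f 0‖ ≤ c := calc
    _ ≤ ρ⁻¹ * ‖x - 0‖ := hLip x 0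
    _ ≤ ρ⁻¹ * ρ ^ 3 := by gcongr; exact (mem_ball_iff_norm.mp hx).le
    _ = c := by rw [hc]; field_simp
  have happrox := (convex_ball _ _).approximatesLinearOn_of_norm_fderiv_sub_le
    (fun x _ => (hf.differentiable one_ne_zero).differentiableAt) hfA
  obtain ⟨g, hg, hgf⟩ := exists_contDiffOn_leftInvOn_of_norm_fderiv_sub_le rfl isOpen_ball
    (convex_ball _ _) hf.contDiffOn one_ne_zero hlb (by rw [hc]; nlinarith) hfA
  have hlow : ρ ^ 3 ≤ ρ - c := by rw [hc]; nlinarith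
  have hup : ρ⁻¹ + c ≤ (ρ ^ 3)⁻¹ := calc
    ρ⁻¹ + c = (ρ ^ 2 + ρ ^ 5) * (ρ ^ 3)⁻¹ := by rw [hc]; field_simp
    _ ≤ 1 * (ρ ^ 3)⁻¹ := by gcongr; nlinarith [pow_le_pow_left₀ hρ.le hρ2.le 2]
    _ = (ρ ^ 3)⁻¹ := one_mul _
  refine ⟨hgf.injOn, fun x hx y hy => ?_, g, hg, hgf⟩
  rw [dist_eq_norm, dist_eq_norm]
  constructor
  · calc ρ ^ 3 * ‖x - y‖ ≤ (ρ - c) * ‖x - y‖ := by gcongr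
      _ ≤ ‖f x - f y‖ := happrox.le_norm_image_sub hlb hx hy
  · calc ‖f x - f y‖ ≤ (ρ⁻¹ + c) * ‖x - y‖ := happrox.norm_image_sub_le hub hx hy
      _ ≤ (ρ ^ 3)⁻¹ * ‖x - y‖ := by gcongr
end

section
/- For every positive integer d there exists a constant C (one may take C = 2d) such that the following holds. Let 0 < ρ ≤ 1/2 and let (u₁,…,u_d) be a family of unit vectors in a Euclidean space E of dimension d such that for each i ∈ {1,…,d}, d(u_i, span(u₁,…,u_{i-1})) ≥ ρ. Then the linear map θ : ℝ^d → E, (t_i) ↦ Σ t_i u_i, is ρ^{-C}-bi-Lipschitz (ℝ^d Euclidean). -/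
open Metric Finset

/-! Put `v = s - t`. Unit vectors give `‖∑ vᵢ uᵢ‖ ≤ ∑ |vᵢ| ≤ d ‖v‖`. Conversely, since `uᵢ` is
`ρ`-far from the span of its predecessors, `ρ |vᵢ| ≤ ‖∑_{j ≤ i} vⱼ uⱼ‖ ≤ ‖∑ vⱼ uⱼ‖ + ∑_{j > i} |vⱼ|`,
and solving these inequalities from the last index downwards bounds `∑ |vᵢ|` by
`(1 + ρ⁻¹)ᵈ ‖∑ vᵢ uᵢ‖`. Both constants are at most `ρ^{-2d}` because `ρ² + ρ ≤ 1`. -/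

theorem norm_mul_infDist_le_norm_smul_add {𝕜 E : Type*} [NormedField 𝕜] [NormedAddCommGroup E]
    [NormedSpace 𝕜 E] (K : Submodule 𝕜 E) (u : E) {x : E} (hx : x ∈ K) (c : 𝕜) :
    ‖c‖ * infDist u K ≤ ‖c • u + x‖ := by
  rcases eq_or_ne c 0 with rfl | hc
  · simp
  have hmem : -c⁻¹ • x ∈ (K : Set E) := K.smul_mem _ hx
  calc ‖c‖ * infDist u K ≤ ‖c‖ * ‖u - -c⁻¹ • x‖ := by
        gcongr
        simpa [dist_eq_norm] using infDist_le_dist_of_mem hmem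
    _ = ‖c • u + x‖ := by
        rw [← norm_smul, neg_smul, sub_neg_eq_add, smul_add, smul_smul, mul_inv_cancel₀ hc,
          one_smul]

theorem Finset.sum_eq_sum_lt_add_add_sum_gt {ι M : Type*} [Fintype ι] [LinearOrder ι]
    [AddCommMonoid M] (f : ι → M) (i : ι) :
    ∑ j, f j = ∑ j with j < i, f j + (f i + ∑ j with i < j, f j) := by
  rw [← sum_filter_add_sum_filter_not univ (· < i)]
  congr 1
  have : univ.filter (¬ · < i) = insert i (univ.filter (i < ·)) := by
    ext j; simp [le_iff_eq_or_lt, eq_comm]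
  rw [this, sum_insert (by simp)]

theorem add_sum_le_pow_mul_of_mul_le_add_sum_gt {ι : Type*} [LinearOrder ι] {a : ι → ℝ}
    {ρ ε : ℝ} (hρ : 0 < ρ) (s : Finset ι)
    (h : ∀ i ∈ s, ρ * a i ≤ ε + ∑ j ∈ s with i < j, a j) :
    ε + ∑ i ∈ s, a i ≤ (1 + ρ⁻¹) ^ #s * ε := by
  induction s using Finset.induction_on_min with
  | empty => simp
  | insert m s hm ih =>
    have hms : m ∉ s := fun h => lt_irrefl m (hm m h)
    have hfilter : {j ∈ insert m s | m < j} = s := by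
      rw [filter_insert, if_neg (lt_irrefl m), filter_true_of_mem hm]
    have ih' := ih fun i hi => by
      have := h i (mem_insert_of_mem hi)
      rwa [filter_insert, if_neg (hm i hi).not_gt] at this
    have hstep : a m ≤ ρ⁻¹ * (ε + ∑ i ∈ s, a i) := by
      rw [inv_mul_eq_div, le_div_iff₀ hρ, mul_comm, ← hfilter]
      exact h m (mem_insert_self m s)
    rw [sum_insert hms, card_insert_of_notMem hms, pow_succ']
    calc ε + (a m + ∑ i ∈ s, a i) = a m + (ε + ∑ i ∈ s, a i) := by ring
      _ ≤ (1 + ρ⁻¹) * (ε + ∑ i ∈ s, a i) := by linarith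
      _ ≤ (1 + ρ⁻¹) * ((1 + ρ⁻¹) ^ #s * ε) := by gcongr
      _ = _ := by ring

section AlmostOrthogonal

variable {ι E : Type*} [Fintype ι] [LinearOrder ι] [NormedAddCommGroup E] [NormedSpace ℝ E]
  {u : ι → E} {ρ : ℝ}

theorem mul_abs_le_norm_sum_smul_add_sum_gt
    (hu : ∀ i, ρ ≤ infDist (u i) (Submodule.span ℝ (u '' Set.Iio i))) (v : ι → ℝ) (i : ι) :
    ρ * |v i| ≤ ‖∑ j, v j • u j‖ + ∑ j with i < j, ‖v j • u j‖ := by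
  have hlt : ∑ j with j < i, v j • u j ∈ Submodule.span ℝ (u '' Set.Iio i) :=
    Submodule.sum_mem _ fun j hj => Submodule.smul_mem _ _ <|
      Submodule.subset_span (Set.mem_image_of_mem u (by simpa using hj))
  calc ρ * |v i| ≤ |v i| * infDist (u i) (Submodule.span ℝ (u '' Set.Iio i)) := by
        rw [mul_comm]; gcongr; exact hu i
    _ ≤ ‖v i • u i + ∑ j with j < i, v j • u j‖ := by
        simpa using norm_mul_infDist_le_norm_smul_add _ (u i) hlt (v i)
    _ = ‖∑ j, v j • u j - ∑ j with i < j, v j • u j‖ := by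
        rw [sum_eq_sum_lt_add_add_sum_gt _ i]; abel_nf
    _ ≤ _ := (norm_sub_le _ _).trans (by gcongr; exact norm_sum_le _ _)

theorem sum_abs_le_one_add_inv_pow_mul_norm_sum_smul (hunit : ∀ i, ‖u i‖ = 1) (hρ : 0 < ρ)
    (hu : ∀ i, ρ ≤ infDist (u i) (Submodule.span ℝ (u '' Set.Iio i))) (v : ι → ℝ) :
    ∑ i, |v i| ≤ (1 + ρ⁻¹) ^ Fintype.card ι * ‖∑ i, v i • u i‖ := by
  have h := add_sum_le_pow_mul_of_mul_le_add_sum_gt (a := fun i => |v i|) hρ univ fun i _ => by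
    simpa [norm_smul, hunit] using mul_abs_le_norm_sum_smul_add_sum_gt hu v i
  rw [card_univ] at h
  linarith [norm_nonneg (∑ i, v i • u i)]

end AlmostOrthogonal

theorem EuclideanSpace.norm_le_sum_abs {ι : Type*} [Fintype ι] (v : EuclideanSpace ℝ ι) :
    ‖v‖ ≤ ∑ i, |v i| := by
  rw [EuclideanSpace.norm_eq, Real.sqrt_le_left (by positivity)]
  simpa using sum_sq_le_sq_sum_of_nonneg (s := univ) (f := fun i => |v i|) fun i _ => abs_nonneg _

theorem EuclideanSpace.sum_abs_le_card_mul_norm {ι : Type*} [Fintype ι]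
    (v : EuclideanSpace ℝ ι) : ∑ i, |v i| ≤ Fintype.card ι * ‖v‖ := by
  calc ∑ i, |v i| ≤ ∑ _i : ι, ‖v‖ := sum_le_sum fun i _ => PiLp.norm_apply_le v i
    _ = _ := by simp

theorem natCast_le_one_add_inv_pow {ρ : ℝ} (hρ : 0 < ρ) (hρ1 : ρ ≤ 1) (n : ℕ) :
    (n : ℝ) ≤ (1 + ρ⁻¹) ^ n := by
  have h1 : 1 ≤ ρ⁻¹ := one_le_inv₀ hρ |>.mpr hρ1
  have := one_add_mul_le_pow (a := ρ⁻¹) (by linarith) n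
  nlinarith [(n.cast_nonneg : (0 : ℝ) ≤ n)]

theorem one_add_inv_pow_le_inv_pow_two_mul {ρ : ℝ} (hρ : 0 < ρ) (hρ2 : ρ ≤ 1 / 2) (n : ℕ) :
    (1 + ρ⁻¹) ^ n ≤ (ρ ^ (2 * n))⁻¹ := by
  have hbase : ρ ^ 2 * (1 + ρ⁻¹) ≤ 1 := by
    rw [mul_add, mul_one, sq, mul_assoc, mul_inv_cancel₀ hρ.ne', mul_one]; nlinarith
  rw [← one_div (ρ ^ _), le_div_iff₀ (by positivity), pow_mul, ← mul_pow, mul_comm]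
  exact pow_le_one₀ (by positivity) hbase

theorem almost_orthogonal_basis_biLipschitz_general
    (d : ℕ) :
    ∃ C : ℕ, ∀ (E : Type) (_ : NormedAddCommGroup E) (_ : InnerProductSpace ℝ E)
      (_ : FiniteDimensional ℝ E), Module.finrank ℝ E = d →
      ∀ ρ : ℝ, 0 < ρ → ρ ≤ 1/2 →
      ∀ u : Fin d → E, (∀ i, ‖u i‖ = 1) →
      (∀ i : Fin d,
        ρ ≤ Metric.infDist (u i)
          (Submodule.span ℝ (u '' {j : Fin d | (j : ℕ) < (i : ℕ)}) : Set E)) →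
      ∀ s t : EuclideanSpace ℝ (Fin d),
        ρ ^ C * ‖s - t‖ ≤ ‖(∑ i, s i • u i) - (∑ i, t i • u i)‖ ∧
        ‖(∑ i, s i • u i) - (∑ i, t i • u i)‖ ≤ (ρ ^ C)⁻¹ * ‖s - t‖ := by
  refine ⟨2 * d, fun E _ _ _ _ ρ hρ hρ2 u hunit hu s t => ?_⟩
  have hdiff : ∑ i, s i • u i - ∑ i, t i • u i = ∑ i, (s - t) i • u i := by
    simp [sub_smul]
  have hK := one_add_inv_pow_le_inv_pow_two_mul hρ hρ2 d
  have hcoeff := sum_abs_le_one_add_inv_pow_mul_norm_sum_smul hunit hρ hu (s - t).ofLp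
  rw [Fintype.card_fin] at hcoeff
  rw [hdiff]
  constructor
  · calc ρ ^ (2 * d) * ‖s - t‖ ≤ ρ ^ (2 * d) * ((ρ ^ (2 * d))⁻¹ * ‖∑ i, (s - t) i • u i‖) := by
          gcongr
          exact (EuclideanSpace.norm_le_sum_abs _).trans (hcoeff.trans (by gcongr))
      _ = ‖∑ i, (s - t) i • u i‖ := by field_simp
  · calc ‖∑ i, (s - t) i • u i‖ ≤ ∑ i, |(s - t) i| := by
          simpa [norm_smul, hunit] using norm_sum_le univ fun i => (s - t) i • u i
      _ ≤ d * ‖s - t‖ := by simpa using EuclideanSpace.sum_abs_le_card_mul_norm (s - t)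
      _ ≤ (ρ ^ (2 * d))⁻¹ * ‖s - t‖ := by
          gcongr
          exact (natCast_le_one_add_inv_pow hρ (by linarith) d).trans hK

/-- For every `d ≥ 1` there is `C` (one may take `C = 2d`) such that: if `0 < ρ ≤ 1/2` and
`u₁,…,u_d` are unit vectors of a `d`-dimensional Euclidean space `E` with
`d(uᵢ, span(u₁,…,u_{i-1})) ≥ ρ` for all `i`, then `θ : (tᵢ) ↦ Σ tᵢ uᵢ` is
`ρ^{-C}`-bi-Lipschitz. -/
theorem almost_orthogonal_basis_biLipschitz
    (d : ℕ) (hd : 0 < d) :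
    ∃ C : ℕ, ∀ (E : Type) (_ : NormedAddCommGroup E) (_ : InnerProductSpace ℝ E)
      (_ : FiniteDimensional ℝ E), Module.finrank ℝ E = d →
      ∀ ρ : ℝ, 0 < ρ → ρ ≤ 1/2 →
      ∀ u : Fin d → E, (∀ i, ‖u i‖ = 1) →
      (∀ i : Fin d,
        ρ ≤ Metric.infDist (u i)
          (Submodule.span ℝ (u '' {j : Fin d | (j : ℕ) < (i : ℕ)}) : Set E)) →
      ∀ s t : EuclideanSpace ℝ (Fin d),
        ρ ^ C * ‖s - t‖ ≤ ‖(∑ i, s i • u i) - (∑ i, t i • u i)‖ ∧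
        ‖(∑ i, s i • u i) - (∑ i, t i • u i)‖ ≤ (ρ ^ C)⁻¹ * ‖s - t‖ :=
  almost_orthogonal_basis_biLipschitz_general d
end
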